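/- arXiv:math/0611037 — 2 statements merged into one kernel-verified Lean document; each statement's English description precedes it below -/
import Mathlib

section
/- Let G be a finite group, p a prime, and U a normal p-subgroup of G. If x, y ∈ G are p-regular elements with xU = yU in G/U, then x and y are conjugate in G. -/
/-!
Induction on `|U|`. The centre `Z` of `U` is a nontrivial abelian normal subgroup of `G`, so by
induction in `G ⧸ Z` some conjugate `x'` of `x` satisfies `x'⁻¹ y ∈ Z`. This reduces the theorem to
abelian `U`, where it is the vanishing of `H¹` in coprime order: write `y = x a` with `a ∈ U` and
let `σ` be conjugation by `x⁻¹`. Then `yⁿ = xⁿ · ∏_{i<n} σⁱ a`, so for `n = |x| |y|` the norm of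
`a` is trivial, and `b = ∏_{k<n} ∏_{i<k} σⁱ a` satisfies `b / σ b = aⁿ`. Since `n` is prime
to `p`, hence to the order of `a`, some power `c` of `b` has `c / σ c = a`, that is, `y = c⁻¹ x c`.
-/

open Finset

section CommGroup

variable {A : Type*} [CommGroup A] (σ : MulAut A)

theorem map_prod_range_pow_apply_mul (a : A) (k : ℕ) :
    σ (∏ i ∈ range k, (σ ^ i) a) * a = ∏ i ∈ range (k + 1), (σ ^ i) a := by
  simp [map_prod, prod_range_succ', pow_succ', MulAut.mul_apply]

theorem exists_div_map_eq_of_prod_range_pow_eq_one {a : A} {n : ℕ}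
    (hN : ∏ i ∈ range n, (σ ^ i) a = 1) (hn : n.Coprime (orderOf a)) : ∃ c, c / σ c = a := by
  set b := ∏ k ∈ range n, ∏ i ∈ range k, (σ ^ i) a
  have hb : b / σ b = a ^ n := by
    have hσb : σ b * a ^ n = b := by
      calc σ b * a ^ n = ∏ k ∈ range n, (σ (∏ i ∈ range k, (σ ^ i) a) * a) := by
            rw [prod_mul_distrib, prod_const, card_range, map_prod]
        _ = ∏ k ∈ range n, ∏ i ∈ range (k + 1), (σ ^ i) a := by
            simp only [map_prod_range_pow_apply_mul]
        _ = b := by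
            have := prod_range_succ' (fun k => ∏ i ∈ range k, (σ ^ i) a) n
            rw [prod_range_succ, hN, mul_one] at this
            simpa using this.symm
    exact div_eq_of_eq_mul'' (hσb.symm.trans (mul_comm _ _))
  obtain ⟨m, hm⟩ := exists_pow_eq_self_of_coprime hn
  exact ⟨b ^ m, by rw [map_pow, ← div_pow, hb, hm]⟩

end CommGroup

section IsMulCommutative

open scoped IsMulCommutative

variable {G : Type*} [Group G] {A : Subgroup G} [A.Normal] [IsMulCommutative A]

theorem mul_pow_eq_pow_mul_prod_range (x : G) (a : A) (k : ℕ) :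
    (x * a) ^ k = x ^ k * ↑(∏ i ∈ range k, ((MulAut.conjNormal (H := A) x)⁻¹ ^ i) a) := by
  induction k with
  | zero => simp
  | succ k ih =>
    rw [pow_succ, ih, ← map_prod_range_pow_apply_mul, Subgroup.coe_mul,
      MulAut.conjNormal_inv_apply, pow_succ]
    group

theorem isConj_of_inv_mul_mem_of_pow_eq_one {x y : G} {n : ℕ} (hxn : x ^ n = 1) (hyn : y ^ n = 1)
    (hxy : x⁻¹ * y ∈ A) (hn : n.Coprime (orderOf (x⁻¹ * y))) : IsConj x y := by
  set σ : MulAut A := (MulAut.conjNormal x)⁻¹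
  set a : A := ⟨x⁻¹ * y, hxy⟩
  have hya : y = x * a := by simp [a]
  have hN : ∏ i ∈ range n, (σ ^ i) a = 1 := by
    have := mul_pow_eq_pow_mul_prod_range x a n
    rwa [← hya, hyn, hxn, one_mul, eq_comm, OneMemClass.coe_eq_one] at this
  obtain ⟨c, hc⟩ := exists_div_map_eq_of_prod_range_pow_eq_one σ hN (by rwa [Subgroup.orderOf_mk])
  have hc' : x⁻¹ * y = (x⁻¹ * c * x)⁻¹ * c := by
    rw [← MulAut.conjNormal_inv_apply, ← Subgroup.coe_inv, ← Subgroup.coe_mul, ← div_eq_inv_mul, hc]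
  refine isConj_iff.mpr ⟨c⁻¹, ?_⟩
  calc (c : G)⁻¹ * x * (c : G)⁻¹⁻¹ = x * ((x⁻¹ * c * x)⁻¹ * c) := by group
    _ = y := by rw [← hc', mul_inv_cancel_left]

theorem IsPGroup.isConj_of_inv_mul_mem_of_isMulCommutative {p : ℕ} (hA : IsPGroup p A) {x y : G}
    (hx : (orderOf x).Coprime p) (hy : (orderOf y).Coprime p) (hxy : x⁻¹ * y ∈ A) :
    IsConj x y :=
  isConj_of_inv_mul_mem_of_pow_eq_one (n := orderOf x * orderOf y)
    (by rw [pow_mul, pow_orderOf_eq_one, one_pow])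
    (by rw [mul_comm, pow_mul, pow_orderOf_eq_one, one_pow]) hxy
    (by simpa using (hA.orderOf_coprime (hx.mul_left hy).symm ⟨_, hxy⟩).symm)

end IsMulCommutative

namespace Subgroup

variable {G : Type*} [Group G]

theorem card_map_mk'_lt_card [Finite G] {N U : Subgroup G} [N.Normal] (hNU : N ≤ U) (hN : N ≠ ⊥) :
    Nat.card (U.map (QuotientGroup.mk' N)) < Nat.card U := by
  have hindex : (U.map (QuotientGroup.mk' N)).index = U.index :=
    index_map_eq U (QuotientGroup.mk'_surjective N) (by rwa [QuotientGroup.ker_mk'])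
  have hquot : Nat.card (G ⧸ N) < Nat.card G := by
    rw [card_eq_card_quotient_mul_card_subgroup N]
    exact lt_mul_of_one_lt_right Nat.card_pos ((one_lt_card_iff_ne_bot N).mpr hN)
  refine Nat.lt_of_mul_lt_mul_right (a := U.index) ?_
  rwa [← hindex, card_mul_index, hindex, card_mul_index]

theorem map_subtype_center_ne_bot (U : Subgroup G) [Nontrivial (center U)] :
    (center U).map U.subtype ≠ ⊥ := by
  rw [Ne, map_eq_bot_iff_of_injective _ U.subtype_injective, ← Ne, ← nontrivial_iff_ne_bot]
  infer_instance

end Subgroup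

theorem QuotientGroup.exists_isConj_inv_mul_mem_of_isConj {G : Type*} [Group G] {N : Subgroup G}
    [N.Normal] {x y : G} (h : IsConj (x : G ⧸ N) y) : ∃ x', IsConj x x' ∧ x'⁻¹ * y ∈ N := by
  obtain ⟨c, hc⟩ := isConj_iff.mp h
  obtain ⟨g, rfl⟩ := QuotientGroup.mk_surjective c
  exact ⟨g * x * g⁻¹, isConj_iff.mpr ⟨g, rfl⟩, QuotientGroup.eq.mp (by simpa using hc)⟩

/-- Let `G` be a finite group, `p` a prime, and `U` a normal `p`-subgroup of `G`.
If `x, y ∈ G` are `p`-regular elements with `xU = yU` in `G ⧸ U`, then `x` and `y`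
are conjugate in `G`. -/
theorem pRegular_isConj_of_eq_in_quotient
    {G : Type*} [Group G] [Finite G] (p : ℕ) [Fact p.Prime]
    (U : Subgroup G) [U.Normal] (hU : IsPGroup p U)
    (x y : G) (hx : Nat.Coprime (orderOf x) p) (hy : Nat.Coprime (orderOf y) p)
    (hxy : (x : G ⧸ U) = (y : G ⧸ U)) :
    IsConj x y := by
  induction hcard : Nat.card U using Nat.strong_induction_on generalizing G with
  | _ n ih =>
    rcases eq_or_ne U ⊥ with rfl | hU1
    · rw [QuotientGroup.eq, Subgroup.mem_bot, inv_mul_eq_one] at hxy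
      exact hxy ▸ IsConj.refl x
    have hUnt : Nontrivial U := (Subgroup.nontrivial_iff_ne_bot U).mpr hU1
    have hZnt := hU.center_nontrivial
    set Z := (Subgroup.center U).map U.subtype
    have hZU : Z ≤ U := Subgroup.map_subtype_le _
    have hconj : IsConj (x : G ⧸ Z) y := by
      refine ih _ (hcard ▸ Subgroup.card_map_mk'_lt_card hZU (Subgroup.map_subtype_center_ne_bot U))
        (U.map (QuotientGroup.mk' Z)) (hU.map _) _ _
        (hx.coprime_dvd_left (orderOf_map_dvd (QuotientGroup.mk' Z) x))
        (hy.coprime_dvd_left (orderOf_map_dvd (QuotientGroup.mk' Z) y)) ?_ rfl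
      rw [QuotientGroup.eq] at hxy ⊢
      exact ⟨_, hxy, by simp⟩
    obtain ⟨x', ⟨c, hc⟩, hx'y⟩ := QuotientGroup.exists_isConj_inv_mul_mem_of_isConj hconj
    exact IsConj.trans ⟨c, hc⟩ <|
      (hU.to_le hZU).isConj_of_inv_mul_mem_of_isMulCommutative (hc.orderOf_eq ▸ hx) hy hx'y
end

section
/- Let G be a finite group, p a prime, U a normal p-subgroup of G, and q a power of p. Let x, y ∈ G be p-regular elements. If there exist g ∈ G and j ≥ 0 such that yU = (g⁻¹ x^{q^j} g)U in G/U, then there exist h ∈ G and i ≥ 0 such that y = h⁻¹ x^{q^i} h in G. In other words, if the images of x and y in G/U lie in the same orbit under the combined action of conjugation and raising to q-th powers, then so do x and y in G. -/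
/-!
Conjugates of powers of `x` are again `p`-regular, so it suffices to show that two `p`-regular
elements `z` and `y` that agree modulo a normal `p`-subgroup `U` are conjugate. Passing to
`G ⧸ Z(U)` and inducting on `|G|` reduces this to abelian `U`. There write `y = z v`, let `σ` be
conjugation by `z⁻¹` and `m` the order of `z`. Then `y ^ m = ∏_{k<m} σ^k v` is both a `p`-element
and a `p'`-element, hence trivial; for `w = ∏_{k<m} (σ^k v)^k` this gives `σ w / w = v ^ m`, and as
`m` is prime to the order of `v`, some power `u` of `w` has `σ u / u = v`, i.e. `u z u⁻¹ = y`.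
-/

open Finset
open scoped IsMulCommutative

theorem MulAut.exists_apply_div_self_eq_of_prod_eq_one {A : Type*} [CommGroup A] {σ : MulAut A}
    {m : ℕ} (hσ : σ ^ m = 1) {v : A} (hv : ∏ k ∈ range m, (σ ^ k) v = 1)
    (hvm : (orderOf v).Coprime m) : ∃ u, σ u / u = v := by
  set w : ℕ → A := fun n ↦ ∏ k ∈ range n, (σ ^ k) v ^ k
  have key (n : ℕ) :
      w n * (σ ^ n) v ^ n * v = σ (w n) * (∏ k ∈ range n, (σ ^ k) v) * (σ ^ n) v := by
    induction n with
    | zero => simp [w]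
    | succ n ih =>
      simp only [w, prod_range_succ, map_mul, map_pow, pow_succ', MulAut.mul_apply] at ih ⊢
      rw [mul_right_comm _ _ v, ih]
      ac_rfl
  have hwm : σ (w m) / w m = v ^ m := by
    have := key m
    rw [hσ, MulAut.one_apply, hv, mul_one] at this
    rw [← mul_right_cancel this, mul_div_cancel_left]
  obtain ⟨c, hc⟩ := exists_pow_eq_self_of_coprime hvm.symm
  exact ⟨w m ^ c, by rw [map_pow, ← div_pow, hwm, hc]⟩

theorem IsConj.orderOf_eq {G : Type*} [Group G] {a b : G} (h : IsConj a b) :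
    orderOf a = orderOf b := by
  obtain ⟨c, rfl⟩ := isConj_iff.mp h
  exact (MulEquiv.orderOf_eq (MulAut.conj c) a).symm

theorem IsPGroup.eq_one_of_orderOf_coprime {G : Type*} [Group G] {p : ℕ} {U : Subgroup G}
    (hU : IsPGroup p U) {g : G} (hg : g ∈ U) (h : (orderOf g).Coprime p) : g = 1 := by
  have := hU.orderOf_coprime h.symm ⟨g, hg⟩
  rwa [Subgroup.orderOf_mk, Nat.coprime_self, orderOf_eq_one_iff] at this

namespace Subgroup

theorem mul_pow_eq_pow_mul_prod_conjNormal {G : Type*} [Group G] {Z : Subgroup G}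
    [Z.Normal] [IsMulCommutative Z] (z : G) (v : Z) (n : ℕ) :
    (z * v) ^ n = z ^ n * ↑(∏ k ∈ range n, (MulAut.conjNormal z⁻¹ ^ k) v) := by
  induction n with
  | zero => simp
  | succ n ih =>
    have hσ (k : ℕ) : (MulAut.conjNormal z⁻¹ ^ (k + 1)) v =
        MulAut.conjNormal z⁻¹ ((MulAut.conjNormal z⁻¹ ^ k) v) := by
      rw [pow_succ', MulAut.mul_apply]
    rw [pow_succ, ih, prod_range_succ', pow_zero, MulAut.one_apply,
      prod_congr rfl fun k _ ↦ hσ k, ← map_prod, coe_mul, MulAut.conjNormal_apply]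
    group

theorem isConj_of_mk_eq_of_isMulCommutative {G : Type*} [Group G] {p : ℕ}
    (Z : Subgroup G) [Z.Normal] [IsMulCommutative Z] (hZ : IsPGroup p Z) {y z : G}
    (hy : (orderOf y).Coprime p) (hz : (orderOf z).Coprime p) (h : (z : G ⧸ Z) = y) :
    IsConj z y := by
  set v : Z := ⟨z⁻¹ * y, QuotientGroup.eq.mp h⟩
  have hy_eq : y = z * v := by simp [v]
  set σ := MulAut.conjNormal (H := Z) z⁻¹
  have hσ : σ ^ orderOf z = 1 := by
    rw [← map_pow, inv_pow, pow_orderOf_eq_one, inv_one, map_one]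
  have hN : ∏ k ∈ range (orderOf z), (σ ^ k) v = 1 := by
    have hpow := mul_pow_eq_pow_mul_prod_conjNormal z v (orderOf z)
    rw [← hy_eq, pow_orderOf_eq_one, one_mul] at hpow
    refine Subtype.ext (hZ.eq_one_of_orderOf_coprime (SetLike.coe_mem _) ?_)
    exact hpow ▸ hy.coprime_dvd_left (orderOf_pow_dvd _)
  obtain ⟨u, hu⟩ := MulAut.exists_apply_div_self_eq_of_prod_eq_one hσ hN
    (hZ.orderOf_coprime hz.symm v)
  refine isConj_iff.mpr ⟨u, ?_⟩
  rw [hy_eq, ← hu, coe_div, MulAut.conjNormal_apply, div_eq_mul_inv]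
  group

universe u

theorem isConj_of_mk_eq {G : Type u} [Group G] [Finite G] {p : ℕ} [Fact p.Prime]
    (U : Subgroup G) [U.Normal] (hU : IsPGroup p U) {y z : G}
    (hy : (orderOf y).Coprime p) (hz : (orderOf z).Coprime p) (h : (z : G ⧸ U) = y) :
    IsConj z y := by
  induction hn : Nat.card G using Nat.strong_induction_on generalizing G with
  | _ n ih =>
  rcases eq_or_ne U ⊥ with rfl | hU_ne
  · rw [QuotientGroup.eq, mem_bot, inv_mul_eq_one] at h
    exact h ▸ IsConj.refl z
  set Z := (center U).map U.subtype
  have hZ_ne : Z ≠ ⊥ := by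
    have : Nontrivial U := U.nontrivial_iff_ne_bot.mpr hU_ne
    exact (map_eq_bot_iff_of_injective _ U.subtype_injective).not.mpr
      ((center U).nontrivial_iff_ne_bot.mp hU.center_nontrivial)
  have hcard : Nat.card (G ⧸ Z) < n := by
    rw [← hn, ← Z.card_mul_index]
    exact lt_mul_of_one_lt_left Nat.card_pos (Z.one_lt_card_iff_ne_bot.mpr hZ_ne)
  obtain ⟨c, hc⟩ := isConj_iff.mp <| ih _ hcard (U.map (QuotientGroup.mk' Z))
    (hU.map _) (hy.coprime_dvd_left (orderOf_map_dvd (QuotientGroup.mk' Z) y))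
    (hz.coprime_dvd_left (orderOf_map_dvd (QuotientGroup.mk' Z) z))
    (QuotientGroup.eq.mpr ⟨z⁻¹ * y, QuotientGroup.eq.mp h, by simp⟩) rfl
  obtain ⟨c, rfl⟩ := QuotientGroup.mk_surjective c
  have hcz : IsConj z (c * z * c⁻¹) := isConj_iff.mpr ⟨c, rfl⟩
  exact hcz.trans (isConj_of_mk_eq_of_isMulCommutative Z
    (hU.to_le (map_subtype_le _)) hy (hcz.orderOf_eq ▸ hz) hc)

end Subgroup

theorem pRegular_conj_pow_of_conj_pow_in_quotient_general
    {G : Type*} [Group G] [Finite G] (p q : ℕ) [Fact p.Prime]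
    (U : Subgroup G) [U.Normal] (hU : IsPGroup p U)
    (x y : G) (hx : Nat.Coprime (orderOf x) p) (hy : Nat.Coprime (orderOf y) p)
    (hxy : ∃ (g : G) (j : ℕ), (y : G ⧸ U) = ((g⁻¹ * x ^ (q ^ j) * g : G) : G ⧸ U)) :
    ∃ (h : G) (i : ℕ), y = h⁻¹ * x ^ (q ^ i) * h := by
  obtain ⟨g, j, hgj⟩ := hxy
  have hconj : IsConj (x ^ q ^ j) (g⁻¹ * x ^ q ^ j * g) := isConj_iff.mpr ⟨g⁻¹, by rw [inv_inv]⟩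
  have hz : (orderOf (g⁻¹ * x ^ q ^ j * g)).Coprime p :=
    hconj.orderOf_eq ▸ hx.coprime_dvd_left (orderOf_pow_dvd _)
  obtain ⟨c, hc⟩ := isConj_iff.mp (hconj.trans (U.isConj_of_mk_eq hU hy hz hgj.symm))
  exact ⟨c⁻¹, j, by rw [← hc, inv_inv]⟩

/-- Let `G` be a finite group, `p` a prime, `U` a normal `p`-subgroup of `G`, and `q` a
power of `p`.  Let `x, y ∈ G` be `p`-regular elements.  If there exist `g ∈ G` and `j ≥ 0`
such that `yU = (g⁻¹ x^(q^j) g)U` in `G ⧸ U`, then there exist `h ∈ G` and `i ≥ 0` such that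
`y = h⁻¹ x^(q^i) h` in `G`. -/
theorem pRegular_conj_pow_of_conj_pow_in_quotient
    {G : Type*} [Group G] [Finite G] (p q : ℕ) [Fact p.Prime]
    (hq : ∃ s : ℕ, q = p ^ s)
    (U : Subgroup G) [U.Normal] (hU : IsPGroup p U)
    (x y : G) (hx : Nat.Coprime (orderOf x) p) (hy : Nat.Coprime (orderOf y) p)
    (hxy : ∃ (g : G) (j : ℕ), (y : G ⧸ U) = ((g⁻¹ * x ^ (q ^ j) * g : G) : G ⧸ U)) :
    ∃ (h : G) (i : ℕ), y = h⁻¹ * x ^ (q ^ i) * h :=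
  pRegular_conj_pow_of_conj_pow_in_quotient_general p q U hU x y hx hy hxy
end
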